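/- In E[[z]], the ratio ₂φ₁(0,0;cq;q,z) / ₂φ₁(0,0;c;q,z) = 1/(1 − a_1 z/(1 − a_2 z/(1 − a_3 z/(1 − ⋯)))), where a_n := −cq^{n−1}/((1 − cq^{n−1})(1 − cq^n)) for n ≥ 1. (Via ₂φ₁(0,0;q^{ν+1};q,−z²/4), this expresses the ratio of Jackson q-Bessel functions J^{(1)}_{ν+1}(z;q)/J^{(1)}_ν(z;q) as a moment generating function of orthogonal polynomials.) -/

import Mathlib

/-! With `Φₖ := ₂φ₁(0,0;cqᵏ;q,z)`, comparing coefficients of `zⁿ` (a rational identity among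
q-Pochhammer symbols) gives Heine's contiguous relation `Φₖ = Φₖ₊₁ − aₖ₊₁ z Φₖ₊₂`. Dividing by
`Φₖ₊₁`, the ratios `Rₖ := Φₖ₊₁/Φₖ` satisfy `Rₖ = 1/(1 − aₖ₊₁ z Rₖ₊₁)`. The map
`T ↦ 1/(1 − a z T)` turns agreement mod `zⁿ` into agreement mod `zⁿ⁺¹`, so unrolling the
recursion `N` times from the trivial tail `1` shows that `R₀` and the depth-`N` convergent agree
mod `z^N`. -/

noncomputable section

/-- `E`, the fraction field of `ℚ[q,c]`. -/
abbrev E : Type := FractionRing (MvPolynomial (Fin 2) ℚ)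

def qv : E := algebraMap (MvPolynomial (Fin 2) ℚ) E (MvPolynomial.X 0)
def cv : E := algebraMap (MvPolynomial (Fin 2) ℚ) E (MvPolynomial.X 1)

/-- The q-Pochhammer symbol `(u;q)_n`. -/
def qPoch (u : E) (n : ℕ) : E := ∏ j ∈ Finset.range n, (1 - u * qv ^ j)

/-- `₂φ₁(0,0;C;q,z) = ∑_{n≥0} z^n/((q;q)_n (C;q)_n) ∈ E[[z]]`. -/
def phi00 (C : E) : PowerSeries E :=
  PowerSeries.mk fun n => 1 / (qPoch qv n * qPoch C n)

/-- `a_n = −cq^{n−1}/((1 − cq^{n−1})(1 − cq^n))`. -/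
def aJ (n : ℕ) : E :=
  -(cv * qv ^ ((n : ℤ) - 1)) / ((1 - cv * qv ^ ((n : ℤ) - 1)) * (1 - cv * qv ^ n))

/-- The depth-`N` convergent of the Stieltjes-type continued fraction
`1/(1 − a_1 z/(1 − a_2 z/(⋯ − a_N z/1)))`: `convS a N k` is the tail whose outermost
numerator is `a_{N-k+1}` (with `convS a N 0 = 1`), so the convergent is `convS a N N`. -/
def convS (a : ℕ → E) (N : ℕ) : ℕ → PowerSeries E
  | 0 => 1
  | k + 1 => (1 - PowerSeries.C (a (N - k)) * PowerSeries.X * convS a N k)⁻¹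

open PowerSeries

section ContinuedFraction

variable {k : Type*} [Field k]

theorem X_pow_succ_dvd_inv_one_sub_sub_inv_one_sub (a : k) {A B : k⟦X⟧} {n : ℕ}
    (h : X ^ n ∣ A - B) :
    X ^ (n + 1) ∣ (1 - C a * X * A)⁻¹ - (1 - C a * X * B)⁻¹ := by
  set U := 1 - C a * X * A
  set V := 1 - C a * X * B
  have hU : constantCoeff U ≠ 0 := by simp [U]
  have hV : constantCoeff V ≠ 0 := by simp [V]
  have hUV : U⁻¹ - V⁻¹ = U⁻¹ * (C a * X * (A - B)) * V⁻¹ := by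
    calc U⁻¹ - V⁻¹ = U⁻¹ * (V - U) * V⁻¹ := by
          rw [mul_sub, sub_mul, mul_assoc, PowerSeries.mul_inv_cancel _ hV,
            PowerSeries.inv_mul_cancel _ hU, mul_one, one_mul]
      _ = U⁻¹ * (C a * X * (A - B)) * V⁻¹ := by ring
  obtain ⟨D, hD⟩ := h
  exact ⟨U⁻¹ * C a * D * V⁻¹, by rw [hUV, hD]; ring⟩

theorem mul_inv_eq_inv_one_sub_of_recurrence {Φ : ℕ → k⟦X⟧} {a : ℕ → k}
    (hΦ : ∀ m, constantCoeff (Φ m) ≠ 0)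
    (hrec : ∀ m, Φ m = Φ (m + 1) - C (a (m + 1)) * X * Φ (m + 2)) (m : ℕ) :
    Φ (m + 1) * (Φ m)⁻¹ = (1 - C (a (m + 1)) * X * (Φ (m + 2) * (Φ (m + 1))⁻¹))⁻¹ := by
  have h : 1 - C (a (m + 1)) * X * (Φ (m + 2) * (Φ (m + 1))⁻¹) = Φ m * (Φ (m + 1))⁻¹ := by
    rw [hrec m, sub_mul, PowerSeries.mul_inv_cancel _ (hΦ (m + 1))]
    ring
  rw [h, eq_inv_iff_mul_eq_one (by simp [hΦ])]
  calc Φ (m + 1) * (Φ m)⁻¹ * (Φ m * (Φ (m + 1))⁻¹)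
      = (Φ (m + 1) * (Φ (m + 1))⁻¹) * (Φ m * (Φ m)⁻¹) := by ring
    _ = 1 := by rw [PowerSeries.mul_inv_cancel _ (hΦ _), PowerSeries.mul_inv_cancel _ (hΦ _),
        one_mul]

end ContinuedFraction

theorem X_pow_dvd_sub_convS {R : ℕ → PowerSeries E} {a : ℕ → E}
    (hR : ∀ m, R m = (1 - C (a (m + 1)) * X * R (m + 1))⁻¹) (N : ℕ) :
    ∀ n ≤ N, X ^ n ∣ R (N - n) - convS a N n
  | 0, _ => by simp
  | n + 1, hn => by
    rw [convS, hR, show N - (n + 1) + 1 = N - n by omega]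
    exact X_pow_succ_dvd_inv_one_sub_sub_inv_one_sub _ (X_pow_dvd_sub_convS hR N n (by omega))

theorem coeff_mul_inv_eq_coeff_convS {Φ : ℕ → PowerSeries E} {a : ℕ → E}
    (hΦ : ∀ m, constantCoeff (Φ m) ≠ 0)
    (hrec : ∀ m, Φ m = Φ (m + 1) - C (a (m + 1)) * X * Φ (m + 2)) {N i : ℕ} (hi : i < N) :
    coeff i (Φ 1 * (Φ 0)⁻¹) = coeff i (convS a N N) := by
  have h := X_pow_dvd_sub_convS (R := fun m => Φ (m + 1) * (Φ m)⁻¹)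
    (mul_inv_eq_inv_one_sub_of_recurrence hΦ hrec) N N le_rfl
  rw [Nat.sub_self] at h
  simpa [sub_eq_zero] using X_pow_dvd_iff.mp h i hi

theorem one_sub_algebraMap_X_mul_qv_pow_ne_zero (i : Fin 2) (j : ℕ) :
    (1 : E) - algebraMap (MvPolynomial (Fin 2) ℚ) E (MvPolynomial.X i) * qv ^ j ≠ 0 := by
  have h : (1 : E) - algebraMap (MvPolynomial (Fin 2) ℚ) E (MvPolynomial.X i) * qv ^ j
      = algebraMap _ E
          (1 - MvPolynomial.X i * MvPolynomial.X 0 ^ j : MvPolynomial (Fin 2) ℚ) := by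
    simp [qv]
  rw [h, Ne, map_eq_zero_iff _ (IsFractionRing.injective _ E)]
  intro h0
  simpa using congrArg MvPolynomial.constantCoeff h0

theorem one_sub_qv_mul_qv_pow_ne_zero (j : ℕ) : (1 : E) - qv * qv ^ j ≠ 0 :=
  one_sub_algebraMap_X_mul_qv_pow_ne_zero 0 j

theorem one_sub_cv_mul_qv_pow_mul_qv_pow_ne_zero (k j : ℕ) :
    (1 : E) - cv * qv ^ k * qv ^ j ≠ 0 := by
  rw [mul_assoc, ← pow_add]
  exact one_sub_algebraMap_X_mul_qv_pow_ne_zero 1 (k + j)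

theorem qPoch_ne_zero {u : E} (hu : ∀ j, 1 - u * qv ^ j ≠ 0) (n : ℕ) : qPoch u n ≠ 0 :=
  Finset.prod_ne_zero_iff.mpr fun j _ => hu j

theorem qPoch_succ (u : E) (n : ℕ) : qPoch u (n + 1) = qPoch u n * (1 - u * qv ^ n) :=
  Finset.prod_range_succ _ _

theorem qPoch_succ' (u : E) (n : ℕ) : qPoch u (n + 1) = (1 - u) * qPoch (u * qv) n := by
  rw [qPoch, Finset.prod_range_succ', qPoch, mul_comm]
  simp only [pow_succ', pow_zero, mul_one, mul_assoc]

theorem constantCoeff_phi00 (u : E) : constantCoeff (phi00 u) = 1 := by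
  simp [phi00, qPoch]

theorem phi00_contiguous {u : E} (hu : ∀ j, 1 - u * qv ^ j ≠ 0) :
    phi00 u = phi00 (u * qv) - C (-u / ((1 - u) * (1 - u * qv))) * X * phi00 (u * qv * qv) := by
  have huq : ∀ j, 1 - u * qv * qv ^ j ≠ 0 := fun j => by
    simpa [mul_assoc, ← pow_succ'] using hu (j + 1)
  have h1 : 1 - u ≠ 0 := by simpa using hu 0
  have h2 : 1 - u * qv ≠ 0 := by simpa using hu 1
  ext (_ | n)
  · simp [phi00, qPoch]
  · have hP2 : qPoch (u * qv * qv) n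
        = qPoch (u * qv) n * (1 - u * qv * qv ^ n) / (1 - u * qv) := by
      rw [eq_div_iff h2, ← qPoch_succ, qPoch_succ', mul_comm]
    have hQ := qPoch_ne_zero one_sub_qv_mul_qv_pow_ne_zero n
    have hP := qPoch_ne_zero huq n
    have h3 := huq n
    have h4 := one_sub_qv_mul_qv_pow_ne_zero n
    rw [map_sub, mul_assoc, coeff_C_mul, coeff_succ_X_mul]
    simp only [phi00, coeff_mk]
    rw [qPoch_succ qv, qPoch_succ' u, qPoch_succ (u * qv), hP2, div_eq_iff (by positivity),
      sub_mul, eq_sub_iff_add_eq]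
    field_simp
    ring

theorem aJ_succ (k : ℕ) :
    aJ (k + 1) = -(cv * qv ^ k) / ((1 - cv * qv ^ k) * (1 - cv * qv ^ k * qv)) := by
  rw [aJ, Nat.cast_succ, add_sub_cancel_right, zpow_natCast, pow_succ, mul_assoc]

/-- Equation (6.6): `₂φ₁(0,0;cq;q,z)/₂φ₁(0,0;c;q,z)` equals the continued fraction
`1/(1 − a_1 z/(1 − a_2 z/(1 − ⋯)))`, in the sense that for every `N ≥ 1` the depth-`N`
convergent agrees with the ratio modulo `z^N`. (Via `₂φ₁(0,0;q^{ν+1};q,−z²/4)` this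
expresses `J^{(1)}_{ν+1}(z;q)/J^{(1)}_ν(z;q)` as a moment generating function of
orthogonal polynomials.) -/
theorem jackson_ratio_continued_fraction :
    ∀ N : ℕ, 1 ≤ N → ∀ i < N,
      PowerSeries.coeff i (phi00 (cv * qv) * (phi00 cv)⁻¹)
        = PowerSeries.coeff i (convS aJ N N) := by
  intro N _ i hi
  have hrec (m : ℕ) : phi00 (cv * qv ^ m)
      = phi00 (cv * qv ^ (m + 1)) - C (aJ (m + 1)) * X * phi00 (cv * qv ^ (m + 2)) := by
    rw [aJ_succ, phi00_contiguous (one_sub_cv_mul_qv_pow_mul_qv_pow_ne_zero m)]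
    ring_nf
  simpa using coeff_mul_inv_eq_coeff_convS (Φ := fun m => phi00 (cv * qv ^ m))
    (fun m => by simp [constantCoeff_phi00]) hrec hi

end
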